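/- arXiv:1709.09272 — 2 statements merged into one kernel-verified Lean document; each statement's English description precedes it below -/
import Mathlib

section
/- Let G be a topological group, K a symmetric compact subset of G containing the identity, and U an open symmetric neighbourhood of the identity such that N ∩ (K·U·U·K) ⊆ U for a closed normal subgroup N of G. Then H := N ∩ U is an open compact subgroup of N, and moreover t·H·t⁻¹ = H for every t ∈ K. -/
/-! Taking `k = 1` in `N ∩ KUUK ⊆ U` shows that `N ∩ U` is closed under products, and
taking `u = 1` that it is stable under conjugation by `K`. Since `closure U ⊆ U U`, also
`N ∩ closure U ⊆ U`, so `N ∩ U = N ∩ closure U` is a closed subset of the compact set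
`closure U`. -/

open scoped Pointwise
open Topology

section Group

variable {G : Type*} [Group G]

theorem Set.mul_subset_mul_mul_mul_of_one_mem {K U : Set G} (hK : (1 : G) ∈ K) :
    U * U ⊆ K * U * U * K := by
  rintro _ ⟨u, hu, v, hv, rfl⟩
  simpa using Set.mul_mem_mul (Set.mul_mem_mul (Set.mul_mem_mul hK hu) hv) hK

theorem Set.conj_mem_mul_mul_mul {K U : Set G} (hU : (1 : G) ∈ U) {t x : G} (ht : t ∈ K)
    (ht' : t⁻¹ ∈ K) (hx : x ∈ U) : t * x * t⁻¹ ∈ K * U * U * K := by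
  simpa using Set.mul_mem_mul (Set.mul_mem_mul (Set.mul_mem_mul ht hx) hU) ht'

theorem Set.image_conj_eq_of_conj_mem {S T : Set G} (hT : T⁻¹ = T)
    (hconj : ∀ t ∈ T, ∀ x ∈ S, t * x * t⁻¹ ∈ S) {t : G} (ht : t ∈ T) :
    (fun x => t * x * t⁻¹) '' S = S := by
  refine Set.Subset.antisymm (Set.image_subset_iff.2 (hconj t ht)) fun x hx => ?_
  have ht' : t⁻¹ ∈ T := by rwa [← Set.mem_inv, hT]
  exact ⟨t⁻¹ * x * t⁻¹⁻¹, hconj t⁻¹ ht' x hx, by group⟩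

def Subgroup.interOfMulSubset (N : Subgroup G) (U : Set G) (hone : (1 : G) ∈ U)
    (hinv : U⁻¹ = U) (hmul : (N : Set G) ∩ (U * U) ⊆ U) : Subgroup G where
  carrier := N ∩ U
  one_mem' := ⟨N.one_mem, hone⟩
  mul_mem' := fun ha hb =>
    ⟨N.mul_mem ha.1 hb.1, hmul ⟨N.mul_mem ha.1 hb.1, Set.mul_mem_mul ha.2 hb.2⟩⟩
  inv_mem' := fun ha => ⟨N.inv_mem ha.1, by rw [← hinv]; exact Set.inv_mem_inv.2 ha.2⟩

variable [TopologicalSpace G] [IsTopologicalGroup G]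

theorem IsClosed.isCompact_inter_of_inter_mul_subset {N U : Set G} (hN : IsClosed N)
    (hU : U ∈ 𝓝 1) (hUc : IsCompact (closure U)) (hmul : N ∩ (U * U) ⊆ U) :
    IsCompact (N ∩ U) := by
  have hclosure : N ∩ closure U = N ∩ U :=
    Set.Subset.antisymm
      (fun x hx => ⟨hx.1, hmul ⟨hx.1, closure_subset_mul_self_of_mem_nhds_one hU hx.2⟩⟩)
      (Set.inter_subset_inter_right _ subset_closure)
  rw [← hclosure]
  exact hUc.of_isClosed_subset (hN.inter isClosed_closure) Set.inter_subset_right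

end Group

theorem inter_open_symmetric_is_open_compact_subgroup_general
    {G : Type*} [Group G] [TopologicalSpace G] [IsTopologicalGroup G]
    (K : Set G) (hKsymm : K⁻¹ = K) (hKone : (1 : G) ∈ K)
    (U : Set G) (hU : IsOpen U) (hUone : (1 : G) ∈ U) (hUsymm : U⁻¹ = U)
    (hUcpt : IsCompact (closure U))
    (N : Subgroup G) (hNnormal : N.Normal) (hNclosed : IsClosed (N : Set G))
    (hsmall : (N : Set G) ∩ (K * U * U * K) ⊆ U) :
    ∃ H : Subgroup G, (H : Set G) = (N : Set G) ∩ U ∧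
      IsCompact (H : Set G) ∧
      IsOpen ((fun x : N => (x : G)) ⁻¹' (H : Set G)) ∧
      ∀ t ∈ K, (fun x => t * x * t⁻¹) '' (H : Set G) = (H : Set G) := by
  have hmul : (N : Set G) ∩ (U * U) ⊆ U :=
    fun x hx => hsmall ⟨hx.1, Set.mul_subset_mul_mul_mul_of_one_mem hKone hx.2⟩
  have hconj : ∀ t ∈ K, ∀ x ∈ (N : Set G) ∩ U, t * x * t⁻¹ ∈ (N : Set G) ∩ U := by
    intro t ht x hx
    have ht' : t⁻¹ ∈ K := by rwa [← Set.mem_inv, hKsymm]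
    have hxN : t * x * t⁻¹ ∈ N := hNnormal.conj_mem x hx.1 t
    exact ⟨hxN, hsmall ⟨hxN, Set.conj_mem_mul_mul_mul hUone ht ht' hx.2⟩⟩
  refine ⟨N.interOfMulSubset U hUone hUsymm hmul, rfl,
    hNclosed.isCompact_inter_of_inter_mul_subset (hU.mem_nhds hUone) hUcpt hmul, ?_,
    fun t ht => Set.image_conj_eq_of_conj_mem hKsymm hconj ht⟩
  have hpreimage : ((↑) : N → G) ⁻¹' ((N : Set G) ∩ U) = (↑) ⁻¹' U := by
    ext x
    simp
  exact hpreimage ▸ hU.preimage continuous_subtype_val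

/-- Let `G` be a topological group, `K` a compact symmetric subset containing the
identity, `U` an open, relatively compact, symmetric neighbourhood of the identity, and
`N` a closed normal subgroup with `N ∩ (K*U*U*K) ⊆ U`.  Then `H := N ∩ U` is the carrier
of a subgroup of `G` which is compact and open in the subspace topology of `N`, and
`t H t⁻¹ = H` for every `t ∈ K`. -/
theorem inter_open_symmetric_is_open_compact_subgroup
    {G : Type*} [Group G] [TopologicalSpace G] [IsTopologicalGroup G] [T2Space G]
    (K : Set G) (hK : IsCompact K) (hKsymm : K⁻¹ = K) (hKone : (1 : G) ∈ K)
    (U : Set G) (hU : IsOpen U) (hUone : (1 : G) ∈ U) (hUsymm : U⁻¹ = U)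
    (hUcpt : IsCompact (closure U))
    (N : Subgroup G) (hNnormal : N.Normal) (hNclosed : IsClosed (N : Set G))
    (hsmall : (N : Set G) ∩ (K * U * U * K) ⊆ U) :
    ∃ H : Subgroup G, (H : Set G) = (N : Set G) ∩ U ∧
      IsCompact (H : Set G) ∧
      IsOpen ((fun x : N => (x : G)) ⁻¹' (H : Set G)) ∧
      ∀ t ∈ K, (fun x => t * x * t⁻¹) '' (H : Set G) = (H : Set G) :=
  inter_open_symmetric_is_open_compact_subgroup_general K hKsymm hKone U hU hUone hUsymm hUcpt N
    hNnormal hNclosed hsmall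
end

section
/- Let G be a locally compact group, and suppose L¹(G) admits a central bounded approximate identity, i.e., a bounded net {e_α} in L¹(G) such that ‖e_α * f − f‖₁ → 0 for all f ∈ L¹(G) and τ₁(s)e_α = e_α for every s ∈ G and every α, where (τ₁(s)g)(t) = g(s⁻¹ts)Δ(s). Then G is unimodular: Δ(s) = 1 for all s ∈ G. -/
/-!
Conjugation `x ↦ s x s⁻¹` pushes a left Haar measure forward to `Δ(s) • μ`, and centrality says
that it multiplies each `e_α` by `Δ(s)`. An integrable `g` with `g ∘ φ = D • g` for such a
dilation `φ` with `D > 1` vanishes: the truncated integrals `∫ min(|g|, c)` are unchanged under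
`c ↦ c / D`, yet tend to `0` as `c → 0`. For `Δ(s) < 1` conjugate by `s⁻¹` instead. An
approximate identity that vanishes cannot approximate the indicator of a compact neighbourhood
of `1`.
-/

open MeasureTheory Filter Topology
open scoped ENNReal

section Dilation

variable {α : Type*} [MeasurableSpace α] {μ : Measure α} {φ : α → α} {D : ℝ} {g : α → ℝ}

theorem lintegral_min_enorm_mul_inv_eq_of_comp_eq_mul (hφ : Measurable φ) (hD : 0 < D)
    (hmap : μ.map φ = ENNReal.ofReal D • μ) (hg : AEStronglyMeasurable g μ)
    (hgφ : ∀ᵐ x ∂μ, g (φ x) = D * g x) (c : ℝ≥0∞) :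
    ∫⁻ x, min ‖g x‖ₑ (c * (ENNReal.ofReal D)⁻¹) ∂μ = ∫⁻ x, min ‖g x‖ₑ c ∂μ := by
  set D' := ENNReal.ofReal D
  have hD'0 : D' ≠ 0 := by simpa [D'] using hD
  have hD'top : D' ≠ ∞ := ENNReal.ofReal_ne_top
  have hmeas : AEMeasurable (fun y => min ‖g y‖ₑ c) (μ.map φ) := by
    rw [hmap]; exact (hg.enorm.min aemeasurable_const).smul_measure _
  refine (ENNReal.mul_right_inj hD'0 hD'top).1 ?_
  calc D' * ∫⁻ x, min ‖g x‖ₑ (c * D'⁻¹) ∂μ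
      = ∫⁻ x, min ‖g (φ x)‖ₑ c ∂μ := by
        rw [← lintegral_const_mul' _ _ hD'top]
        refine lintegral_congr_ae ?_
        filter_upwards [hgφ] with x hx
        rw [hx, enorm_mul, Real.enorm_of_nonneg hD.le, mul_min, ← div_eq_mul_inv,
          ENNReal.mul_div_cancel hD'0 hD'top]
    _ = ∫⁻ y, min ‖g y‖ₑ c ∂(μ.map φ) := (lintegral_map' hmeas hφ.aemeasurable).symm
    _ = D' * ∫⁻ x, min ‖g x‖ₑ c ∂μ := by rw [hmap, lintegral_smul_measure, smul_eq_mul]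

theorem ae_eq_zero_of_comp_eq_mul (hφ : Measurable φ) (hD : 1 < D)
    (hmap : μ.map φ = ENNReal.ofReal D • μ) (hg : Integrable g μ)
    (hgφ : ∀ᵐ x ∂μ, g (φ x) = D * g x) : g =ᵐ[μ] 0 := by
  set r := (ENNReal.ofReal D)⁻¹
  have hr : r < 1 := ENNReal.inv_lt_one.2 (by simpa using hD)
  have hinv : ∀ n : ℕ, ∫⁻ x, min ‖g x‖ₑ (r ^ n) ∂μ = ∫⁻ x, min ‖g x‖ₑ 1 ∂μ := by
    intro n
    induction n with
    | zero => simp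
    | succ n ih =>
      rw [pow_succ,
        lintegral_min_enorm_mul_inv_eq_of_comp_eq_mul hφ (by linarith) hmap hg.1 hgφ, ih]
  have hlim : Tendsto (fun n : ℕ => ∫⁻ x, min ‖g x‖ₑ (r ^ n) ∂μ) atTop (𝓝 0) := by
    simpa using tendsto_lintegral_of_dominated_convergence' (fun x => ‖g x‖ₑ)
      (fun n => hg.1.enorm.min aemeasurable_const)
      (fun n => ae_of_all _ fun x => min_le_left _ _) hg.2.ne
      (ae_of_all _ fun x =>
        tendsto_const_nhds.min (ENNReal.tendsto_pow_atTop_nhds_zero_of_lt_one hr))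
  have hzero : ∫⁻ x, min ‖g x‖ₑ 1 ∂μ = 0 :=
    tendsto_nhds_unique (by simpa only [hinv] using hlim) tendsto_const_nhds |>.symm
  filter_upwards [(lintegral_eq_zero_iff' (hg.1.enorm.min aemeasurable_const)).1 hzero] with x hx
  simpa using hx

end Dilation

section RightTranslation

variable {G : Type*} [Group G] [MeasurableSpace G] [MeasurableMul G] {μ : Measure G} {s : G}
  {d : ℝ}

theorem map_mul_right_inv_eq_smul
    (hΔ : ∀ E : Set G, MeasurableSet E → μ ((· * s) '' E) = ENNReal.ofReal d * μ E) :
    μ.map (· * s⁻¹) = ENNReal.ofReal d • μ := by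
  ext B hB
  rw [Measure.map_apply (measurable_mul_const _) hB, ← Set.image_mul_right, hΔ B hB,
    Measure.smul_apply, smul_eq_mul]

theorem map_mul_right_eq_smul (hd : 0 < d)
    (hΔ : ∀ E : Set G, MeasurableSet E → μ ((· * s) '' E) = ENNReal.ofReal d * μ E) :
    μ.map (· * s) = (ENNReal.ofReal d)⁻¹ • μ := by
  ext B hB
  have h := hΔ _ (measurable_mul_const s hB)
  rw [Set.image_preimage_eq B (mul_right_surjective s)] at h
  rw [Measure.map_apply (measurable_mul_const _) hB, Measure.smul_apply, smul_eq_mul, h,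
    ← mul_assoc, ENNReal.inv_mul_cancel (by simpa using hd) ENNReal.ofReal_ne_top, one_mul]

variable [μ.IsMulLeftInvariant]

theorem map_conj_eq_smul
    (hΔ : ∀ E : Set G, MeasurableSet E → μ ((· * s) '' E) = ENNReal.ofReal d * μ E) :
    μ.map (fun x => s * x * s⁻¹) = ENNReal.ofReal d • μ := by
  rw [← map_mul_right_inv_eq_smul hΔ]
  conv_rhs => rw [← map_mul_left_eq_self μ s]
  rw [Measure.map_map (measurable_mul_const _) (measurable_const_mul _)]
  rfl

theorem map_conj_inv_eq_smul (hd : 0 < d)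
    (hΔ : ∀ E : Set G, MeasurableSet E → μ ((· * s) '' E) = ENNReal.ofReal d * μ E) :
    μ.map (fun x => s⁻¹ * x * s) = ENNReal.ofReal d⁻¹ • μ := by
  rw [ENNReal.ofReal_inv_of_pos hd, ← map_mul_right_eq_smul hd hΔ]
  conv_rhs => rw [← map_mul_left_eq_self μ s⁻¹]
  rw [Measure.map_map (measurable_mul_const _) (measurable_const_mul _)]
  rfl

end RightTranslation

theorem not_forall_ae_eq_zero_of_tendsto_conv_sub {G : Type*} [Group G] [TopologicalSpace G]
    [IsTopologicalGroup G] [LocallyCompactSpace G] [MeasurableSpace G] [BorelSpace G]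
    {μ : Measure G} [μ.IsHaarMeasure] {ι : Type*} {l : Filter ι} [l.NeBot] {e : ι → G → ℝ}
    (hbai : ∀ f : G → ℝ, Integrable f μ →
      Tendsto (fun α => ∫ x, |(∫ y, e α y * f (y⁻¹ * x) ∂μ) - f x| ∂μ) l (𝓝 0)) :
    ¬ ∀ α, e α =ᵐ[μ] 0 := by
  intro hzero
  obtain ⟨K, hK1, hK, hKcl⟩ := exists_mem_nhds_isCompact_isClosed (1 : G)
  set f : G → ℝ := K.indicator 1
  have hf : Integrable f μ :=
    (integrable_indicator_iff hKcl.measurableSet).2 (integrableOn_const hK.measure_lt_top.ne)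
  have hconv : ∀ α x, ∫ y, e α y * f (y⁻¹ * x) ∂μ = 0 := fun α x =>
    integral_eq_zero_of_ae (by filter_upwards [hzero α] with y hy; simp [hy])
  have hconst : ∀ α, ∫ x, |(∫ y, e α y * f (y⁻¹ * x) ∂μ) - f x| ∂μ = μ.real K := by
    intro α
    have hf_abs : ∀ x, |f x| = f x := fun x =>
      abs_of_nonneg (Set.indicator_nonneg (fun _ _ => zero_le_one) x)
    simp only [hconv, zero_sub, abs_neg, hf_abs]
    exact integral_indicator_one hKcl.measurableSet
  have hK0 : μ.real K = 0 :=
    tendsto_nhds_unique (by simpa only [hconst] using hbai f hf) tendsto_const_nhds |>.symm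
  rw [measureReal_eq_zero_iff hK.measure_lt_top.ne] at hK0
  exact (Measure.measure_pos_of_mem_nhds μ hK1).ne' hK0

theorem unimodular_of_central_bai_general
    {G : Type*} [Group G] [TopologicalSpace G] [IsTopologicalGroup G]
    [LocallyCompactSpace G] [MeasurableSpace G] [BorelSpace G]
    (μ : Measure G) [μ.IsHaarMeasure]
    (Δ : G → ℝ) (hΔpos : ∀ s, 0 < Δ s)
    (hΔ : ∀ (s : G) (E : Set G), MeasurableSet E →
      μ ((fun x => x * s) '' E) = ENNReal.ofReal (Δ s) * μ E)
    {ι : Type*} (l : Filter ι) [l.NeBot] (e : ι → G → ℝ)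
    (heint : ∀ α, Integrable (e α) μ)
    (hbai : ∀ f : G → ℝ, Integrable f μ →
      Filter.Tendsto
        (fun α => ∫ x, |(∫ y, e α y * f (y⁻¹ * x) ∂μ) - f x| ∂μ) l (nhds 0))
    (hcentral : ∀ (s : G) (α : ι) (x : G), e α (s⁻¹ * x * s) * Δ s = e α x) :
    ∀ s : G, Δ s = 1 := by
  have no_dilation : ∀ (φ : G → G) (D : ℝ), Measurable φ → 1 < D →
      μ.map φ = ENNReal.ofReal D • μ → (∀ α x, e α (φ x) = D * e α x) → False :=
    fun φ D hφ hD hmap he => not_forall_ae_eq_zero_of_tendsto_conv_sub hbai fun α =>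
      ae_eq_zero_of_comp_eq_mul hφ hD hmap (heint α) (ae_of_all _ (he α))
  intro s
  rcases lt_trichotomy (Δ s) 1 with hlt | heq | hgt
  · refine (no_dilation _ _ (by fun_prop) (one_lt_inv_iff₀.2 ⟨hΔpos s, hlt⟩)
      (map_conj_inv_eq_smul (hΔpos s) (hΔ s)) fun α x => ?_).elim
    rw [← hcentral s α x, inv_mul_eq_div, mul_div_cancel_right₀ _ (hΔpos s).ne']
  · exact heq
  · refine (no_dilation _ _ (by fun_prop) hgt (map_conj_eq_smul (hΔ s)) fun α x => ?_).elim
    rw [← hcentral s α (s * x * s⁻¹), mul_comm]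
    congr 2
    group

/-- If the group algebra `L¹(G)` of a locally compact group admits a central bounded
approximate identity `{e_α}` (i.e. `‖e_α * f − f‖₁ → 0` for all `f ∈ L¹(G)` and
`τ₁(s)e_α = e_α` for all `s`, where `(τ₁(s)g)(t) = g(s⁻¹ts)Δ(s)`), then `G` is
unimodular: `Δ ≡ 1`. -/
theorem unimodular_of_central_bai
    {G : Type*} [Group G] [TopologicalSpace G] [IsTopologicalGroup G]
    [LocallyCompactSpace G] [T2Space G] [MeasurableSpace G] [BorelSpace G]
    (μ : Measure G) [μ.IsHaarMeasure]
    (Δ : G → ℝ) (hΔpos : ∀ s, 0 < Δ s)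
    (hΔ : ∀ (s : G) (E : Set G), MeasurableSet E →
      μ ((fun x => x * s) '' E) = ENNReal.ofReal (Δ s) * μ E)
    {ι : Type*} (l : Filter ι) [l.NeBot] (e : ι → G → ℝ)
    (heint : ∀ α, Integrable (e α) μ)
    (C : ℝ) (hebdd : ∀ α, (∫ x, |e α x| ∂μ) ≤ C)
    (hbai : ∀ f : G → ℝ, Integrable f μ →
      Filter.Tendsto
        (fun α => ∫ x, |(∫ y, e α y * f (y⁻¹ * x) ∂μ) - f x| ∂μ) l (nhds 0))
    (hcentral : ∀ (s : G) (α : ι) (x : G), e α (s⁻¹ * x * s) * Δ s = e α x) :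
    ∀ s : G, Δ s = 1 :=
  unimodular_of_central_bai_general μ Δ hΔpos hΔ l e heint hbai hcentral
end
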